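/- arXiv:1311.6849 — 4 statements merged into one kernel-verified Lean document; each statement's English description precedes it below -/
import Mathlib

section
/- Let I ⊆ ℝ^n be a nonempty closed convex cone, S a linear subspace of ℝ^n with S ⊆ I, and D := −I = {x ∈ ℝ^n : −x ∈ I} (so S ⊆ D). Then for every ε ∈ ℝ^n with ε ∉ S, every s ∈ S, and every σ > 0, the double-cone statistic satisfies T(s + σε) = T(ε). -/
/-- The metric projection onto a subset `K` of `ℝⁿ`: the (for nonempty closed convex `K`,
unique) point of `K` nearest to `y`. -/
noncomputable def proj {n : ℕ} (K : Set (EuclideanSpace ℝ (Fin n)))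
    (y : EuclideanSpace ℝ (Fin n)) : EuclideanSpace ℝ (Fin n) := by
  classical exact if h : ∃ p ∈ K, ∀ q ∈ K, ‖y - p‖ ≤ ‖y - q‖ then h.choose else 0

/-- The double-cone statistic
`T(y) := max{‖Π(y|S) − Π(y|I)‖², ‖Π(y|S) − Π(y|D)‖²} / ‖y − Π(y|S)‖²` for `y ∉ S`
(and `T(y) := 0` for `y ∈ S`). -/
noncomputable def Tstat {n : ℕ} (S I D : Set (EuclideanSpace ℝ (Fin n)))
    (y : EuclideanSpace ℝ (Fin n)) : ℝ := by
  classical exact if y ∈ S then 0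
    else max (‖proj S y - proj I y‖ ^ 2) (‖proj S y - proj D y‖ ^ 2) / ‖y - proj S y‖ ^ 2

open Metric

lemma proj_eq {n : ℕ} {K : Set (EuclideanSpace ℝ (Fin n))} (hK : Convex ℝ K)
    {y p : EuclideanSpace ℝ (Fin n)} (hp : p ∈ K)
    (hmin : ∀ q ∈ K, ‖y - p‖ ≤ ‖y - q‖) : proj K y = p := by
  have h : ∃ p ∈ K, ∀ q ∈ K, ‖y - p‖ ≤ ‖y - q‖ := ⟨p, hp, hmin⟩
  rw [proj, dif_pos h]
  obtain ⟨hp₁, hmin₁⟩ := h.choose_spec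
  set p₁ := h.choose with hp₁def
  -- uniqueness via parallelogram law
  have hm : (1/2 : ℝ) • p₁ + (1/2 : ℝ) • p ∈ K :=
    hK hp₁ hp (by norm_num) (by norm_num) (by norm_num)
  have key := parallelogram_law_with_norm ℝ (y - p₁) (y - p)
  have h2 : (y - p₁) + (y - p) = (2:ℝ) • (y - ((1/2 : ℝ) • p₁ + (1/2 : ℝ) • p)) := by
    module
  have h3 : (y - p₁) - (y - p) = p - p₁ := by abel
  rw [h2, h3, norm_smul] at key
  have e1 : ‖y - p₁‖ ≤ ‖y - ((1/2 : ℝ) • p₁ + (1/2 : ℝ) • p)‖ := hmin₁ _ hm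
  have e2 : ‖y - p‖ ≤ ‖y - ((1/2 : ℝ) • p₁ + (1/2 : ℝ) • p)‖ := hmin _ hm
  have e3 : ‖y - p₁‖ = ‖y - p‖ := le_antisymm (hmin₁ _ hp) (hmin _ hp₁)
  have : ‖p - p₁‖ = 0 := by
    simp only [Real.norm_ofNat] at key
    nlinarith [norm_nonneg (p - p₁), norm_nonneg (y - p₁)]
  have := norm_eq_zero.mp this
  have : p = p₁ := by
    have := sub_eq_zero.mp this; exact this
  exact this.symm

lemma proj_smul_add {n : ℕ} {K : Set (EuclideanSpace ℝ (Fin n))}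
    (hKconv : Convex ℝ K) (hKcl : IsClosed K) (hKne : K.Nonempty)
    {s : EuclideanSpace ℝ (Fin n)} {σ : ℝ} (hσ : 0 < σ)
    (hinv : ∀ q, q ∈ K ↔ s + σ • q ∈ K) (y : EuclideanSpace ℝ (Fin n)) :
    proj K (s + σ • y) = s + σ • proj K y := by
  obtain ⟨p, hpK, hpd⟩ := hKcl.exists_infDist_eq_dist hKne y
  have hmin : ∀ q ∈ K, ‖y - p‖ ≤ ‖y - q‖ := by
    intro q hq
    have := infDist_le_dist_of_mem (x := y) hq
    rw [hpd] at this
    simpa [dist_eq_norm] using this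
  rw [proj_eq hKconv hpK hmin]
  have hmin' : ∀ q ∈ K, ‖(s + σ • y) - (s + σ • p)‖ ≤ ‖(s + σ • y) - q‖ := by
    intro q hq
    have hq' : σ⁻¹ • (q - s) ∈ K := by
      rw [hinv]
      have : s + σ • σ⁻¹ • (q - s) = q := by
        rw [smul_smul, mul_inv_cancel₀ hσ.ne', one_smul]; abel
      rwa [this]
    have h1 : (s + σ • y) - q = σ • (y - σ⁻¹ • (q - s)) := by
      rw [smul_sub, smul_smul, mul_inv_cancel₀ hσ.ne', one_smul]; abel
    have h2 : (s + σ • y) - (s + σ • p) = σ • (y - p) := by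
      rw [smul_sub]; abel
    rw [h1, h2, norm_smul, norm_smul]
    exact mul_le_mul_of_nonneg_left (hmin _ hq') (norm_nonneg _)
  exact proj_eq hKconv ((hinv p).mp hpK) hmin'

/-- the double-cone statistic, for a nonempty closed convex cone `I`, a
linear subspace `S ⊆ I` and the opposite cone `D = −I`, is invariant under translations in
`S` and positive scalings: `T(s + σε) = T(ε)` for `ε ∉ S`, `s ∈ S`, `σ > 0`. -/
theorem stmt3 {n : ℕ} (I : Set (EuclideanSpace ℝ (Fin n)))
    (hne : I.Nonempty) (hclosed : IsClosed I) (hconv : Convex ℝ I)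
    (hcone : ∀ θ ∈ I, ∀ t : ℝ, 0 < t → t • θ ∈ I)
    (S : Submodule ℝ (EuclideanSpace ℝ (Fin n))) (hSI : (S : Set (EuclideanSpace ℝ (Fin n))) ⊆ I)
    (ε : EuclideanSpace ℝ (Fin n)) (hε : ε ∉ S)
    (s : EuclideanSpace ℝ (Fin n)) (hs : s ∈ S) (σ : ℝ) (hσ : 0 < σ) :
    Tstat (S : Set (EuclideanSpace ℝ (Fin n))) I (-I) (s + σ • ε) =
      Tstat (S : Set (EuclideanSpace ℝ (Fin n))) I (-I) ε := by
  have hadd : ∀ a ∈ I, ∀ b ∈ I, a + b ∈ I := by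
    intro a ha b hb
    have h2 : (1/2 : ℝ) • a + (1/2 : ℝ) • b ∈ I :=
      hconv ha hb (by norm_num) (by norm_num) (by norm_num)
    have := hcone _ h2 2 (by norm_num)
    have he : (2:ℝ) • ((1/2 : ℝ) • a + (1/2 : ℝ) • b) = a + b := by module
    rwa [he] at this
  -- invariance of I under x ↦ s' + σ • x for s' ∈ S
  have hIinv : ∀ s' ∈ S, ∀ q, q ∈ I ↔ s' + σ • q ∈ I := by
    intro s' hs' q
    constructor
    · intro hq
      exact hadd _ (hSI hs') _ (hcone _ hq σ hσ)
    · intro h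
      have h2 : (-s') + (s' + σ • q) ∈ I := hadd _ (hSI (S.neg_mem hs')) _ h
      have h3 := hcone _ h2 σ⁻¹ (inv_pos.mpr hσ)
      have he : σ⁻¹ • ((-s') + (s' + σ • q)) = q := by
        rw [neg_add_cancel_left, smul_smul, inv_mul_cancel₀ hσ.ne', one_smul]
      rwa [he] at h3
  have hSinv : ∀ q, q ∈ (S : Set (EuclideanSpace ℝ (Fin n))) ↔
      s + σ • q ∈ (S : Set (EuclideanSpace ℝ (Fin n))) := by
    intro q
    constructor
    · intro hq; exact S.add_mem hs (S.smul_mem σ hq)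
    · intro h
      have h2 := S.smul_mem σ⁻¹ (S.sub_mem h hs)
      have he : σ⁻¹ • ((s + σ • q) - s) = q := by
        rw [add_sub_cancel_left, smul_smul, inv_mul_cancel₀ hσ.ne', one_smul]
      rwa [he] at h2
  have hDinv : ∀ q, q ∈ (-I) ↔ s + σ • q ∈ (-I) := by
    intro q
    simp only [Set.mem_neg]
    have he : -(s + σ • q) = (-s) + σ • (-q) := by module
    rw [he]
    exact hIinv (-s) (S.neg_mem hs) (-q)
  -- projection equivariance
  have hPS := proj_smul_add (K := (S : Set (EuclideanSpace ℝ (Fin n)))) (S.convex)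
    (S.closed_of_finiteDimensional) ⟨0, S.zero_mem⟩ hσ hSinv ε
  have hPI := proj_smul_add hconv hclosed hne hσ (hIinv s hs) ε
  have hPD := proj_smul_add (hconv.neg) (hclosed.neg) (hne.neg) hσ hDinv ε
  have hy : s + σ • ε ∉ (S : Set (EuclideanSpace ℝ (Fin n))) := fun h => hε ((hSinv ε).mpr h)
  rw [Tstat, Tstat]
  simp only [hy, hε, if_neg, dif_neg]
  rw [hPS, hPI, hPD]
  have d1 : (s + σ • proj (S : Set (EuclideanSpace ℝ (Fin n))) ε) - (s + σ • proj I ε)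
      = σ • (proj (S : Set (EuclideanSpace ℝ (Fin n))) ε - proj I ε) := by module
  have d2 : (s + σ • proj (S : Set (EuclideanSpace ℝ (Fin n))) ε) - (s + σ • proj (-I) ε)
      = σ • (proj (S : Set (EuclideanSpace ℝ (Fin n))) ε - proj (-I) ε) := by module
  have d3 : (s + σ • ε) - (s + σ • proj (S : Set (EuclideanSpace ℝ (Fin n))) ε)
      = σ • (ε - proj (S : Set (EuclideanSpace ℝ (Fin n))) ε) := by module
  rw [d1, d2, d3]
  have hn : ∀ v : EuclideanSpace ℝ (Fin n), ‖σ • v‖ ^ 2 = σ ^ 2 * ‖v‖ ^ 2 := by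
    intro v
    rw [norm_smul, Real.norm_eq_abs, mul_pow, sq_abs]
  rw [hn, hn, hn, ← mul_max_of_nonneg _ _ (sq_nonneg σ),
    mul_div_mul_left _ _ (pow_ne_zero 2 hσ.ne')]
  simp [hε]
end

section
/- Let I ⊆ ℝ^n be a nonempty closed convex cone, S a linear subspace of ℝ^n with S ⊆ I, and D := −I. Then 0 ≤ T(y) ≤ 1 for every y ∉ S, and for all ε, ε̂ ∈ ℝ^n with ε ∉ S and ε̂ ∉ S, |√(T(ε)) − √(T(ε̂))| ≤ 4‖ε − ε̂‖ / ‖ε − Π(ε|S)‖. -/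
/-!
Projections onto closed convex sets are firmly nonexpansive, so both `Π(·|K)` and the residual
`y ↦ y − Π(y|K)` are 1-Lipschitz. For a closed convex cone `K ⊇ S`, the residual `y − Π(y|K)` is
orthogonal to `Π(y|K)` and to `S`, hence to `Π(y|K) − Π(y|S)`, and Pythagoras gives
`‖Π(y|S) − Π(y|K)‖ ≤ ‖y − Π(y|S)‖`; applied to `K = I` and `K = D` this is `T ≤ 1`.
Writing `√T = F / N` with `F = max ‖Π(·|S) − Π(·|I)‖ ‖Π(·|S) − Π(·|D)‖` (which is
2-Lipschitz) and `N = ‖· − Π(·|S)‖` (1-Lipschitz, `F ≤ N`), the Lipschitz bound follows from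
`F₁/N₁ − F₂/N₂ = ((F₁ − F₂) + (F₂/N₂)(N₂ − N₁)) / N₁`.
-/

lemma abs_div_sub_div_le {a b c d δ : ℝ} (hc : 0 < c) (hd : 0 < d) (hb : 0 ≤ b) (hbd : b ≤ d)
    (hab : |a - b| ≤ 2 * δ) (hcd : |c - d| ≤ δ) : |a / c - b / d| ≤ 3 * δ / c := by
  have hratio : |b / d| ≤ 1 := by
    rw [abs_of_nonneg (by positivity)]
    exact div_le_one_of_le₀ hbd hd.le
  have hsplit : a / c - b / d = ((a - b) + b / d * (d - c)) / c := by field_simp; ring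
  rw [hsplit, abs_div, abs_of_pos hc]
  gcongr
  calc |(a - b) + b / d * (d - c)| ≤ |a - b| + |b / d| * |d - c| := by
        rw [← abs_mul]; exact abs_add_le _ _
    _ ≤ 2 * δ + 1 * δ := by
        rw [abs_sub_comm d c]
        gcongr
    _ = 3 * δ := by ring

open scoped RealInnerProductSpace

local notation "𝔼" n:max => EuclideanSpace ℝ (Fin n)

section

variable {n : ℕ}

section Projection

variable {K : Set (𝔼 n)}

lemma exists_forall_norm_sub_le (hne : K.Nonempty) (hK : IsClosed K) (hKc : Convex ℝ K)
    (y : 𝔼 n) : ∃ p ∈ K, ∀ q ∈ K, ‖y - p‖ ≤ ‖y - q‖ := by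
  obtain ⟨p, hp, hmin⟩ := exists_norm_eq_iInf_of_complete_convex hne hK.isComplete hKc y
  refine ⟨p, hp, fun q hq => hmin ▸ ciInf_le ⟨0, ?_⟩ (⟨q, hq⟩ : K)⟩
  rintro _ ⟨w, rfl⟩
  exact norm_nonneg _

lemma proj_mem_and_norm_sub_le (hne : K.Nonempty) (hK : IsClosed K) (hKc : Convex ℝ K)
    (y : 𝔼 n) : proj K y ∈ K ∧ ∀ q ∈ K, ‖y - proj K y‖ ≤ ‖y - q‖ := by
  have hex := exists_forall_norm_sub_le hne hK hKc y
  rw [proj, dif_pos hex]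
  exact hex.choose_spec

lemma proj_mem (hne : K.Nonempty) (hK : IsClosed K) (hKc : Convex ℝ K) (y : 𝔼 n) :
    proj K y ∈ K :=
  (proj_mem_and_norm_sub_le hne hK hKc y).1

lemma inner_sub_proj_sub_proj_nonpos (hne : K.Nonempty) (hK : IsClosed K) (hKc : Convex ℝ K)
    (y : 𝔼 n) {w : 𝔼 n} (hw : w ∈ K) : ⟪y - proj K y, w - proj K y⟫ ≤ 0 := by
  obtain ⟨hp, hmin⟩ := proj_mem_and_norm_sub_le hne hK hKc y
  have : Nonempty K := hne.to_subtype
  refine (norm_eq_iInf_iff_real_inner_le_zero hKc hp).1 ?_ w hw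
  exact le_antisymm (le_ciInf fun q => hmin q q.2)
    (ciInf_le ⟨0, Set.forall_mem_range.2 fun _ => norm_nonneg _⟩ (⟨proj K y, hp⟩ : K))

lemma inner_sub_proj_eq_zero (hne : K.Nonempty) (hK : IsClosed K) (hKc : Convex ℝ K)
    (y : 𝔼 n) {v : 𝔼 n} (hadd : proj K y + v ∈ K) (hsub : proj K y - v ∈ K) :
    ⟪y - proj K y, v⟫ = 0 := by
  have h₁ := inner_sub_proj_sub_proj_nonpos hne hK hKc y hadd
  have h₂ := inner_sub_proj_sub_proj_nonpos hne hK hKc y hsub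
  rw [add_sub_cancel_left] at h₁
  rw [sub_sub_cancel_left, inner_neg_right] at h₂
  linarith

lemma norm_sq_proj_sub_proj_le_inner (hne : K.Nonempty) (hK : IsClosed K) (hKc : Convex ℝ K)
    (a b : 𝔼 n) : ‖proj K a - proj K b‖ ^ 2 ≤ ⟪a - b, proj K a - proj K b⟫ := by
  have ha := inner_sub_proj_sub_proj_nonpos hne hK hKc a (proj_mem hne hK hKc b)
  have hb := inner_sub_proj_sub_proj_nonpos hne hK hKc b (proj_mem hne hK hKc a)
  rw [← real_inner_self_eq_norm_sq]
  simp only [inner_sub_left, inner_sub_right, real_inner_comm] at ha hb ⊢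
  linarith

lemma norm_proj_sub_proj_le (hne : K.Nonempty) (hK : IsClosed K) (hKc : Convex ℝ K)
    (a b : 𝔼 n) : ‖proj K a - proj K b‖ ≤ ‖a - b‖ := by
  have h := (norm_sq_proj_sub_proj_le_inner hne hK hKc a b).trans (real_inner_le_norm _ _)
  nlinarith [norm_nonneg (proj K a - proj K b), norm_nonneg (a - b)]

lemma norm_sub_proj_sub_sub_proj_le (hne : K.Nonempty) (hK : IsClosed K) (hKc : Convex ℝ K)
    (a b : 𝔼 n) : ‖(a - proj K a) - (b - proj K b)‖ ≤ ‖a - b‖ := by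
  have h := norm_sq_proj_sub_proj_le_inner hne hK hKc a b
  have hsq : ‖(a - proj K a) - (b - proj K b)‖ ^ 2 ≤ ‖a - b‖ ^ 2 := by
    rw [show (a - proj K a) - (b - proj K b) = (a - b) - (proj K a - proj K b) by abel,
      norm_sub_sq_real]
    linarith [sq_nonneg ‖proj K a - proj K b‖]
  exact (pow_le_pow_iff_left₀ (norm_nonneg _) (norm_nonneg _) two_ne_zero).1 hsq

lemma norm_sub_proj_pos (hne : K.Nonempty) (hK : IsClosed K) (hKc : Convex ℝ K)
    {y : 𝔼 n} (hy : y ∉ K) : 0 < ‖y - proj K y‖ := by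
  refine norm_pos_iff.2 fun h => hy ?_
  rw [sub_eq_zero.1 h]
  exact proj_mem hne hK hKc y

lemma abs_norm_proj_sub_proj_sub_le {L : Set (𝔼 n)} (hne : K.Nonempty) (hK : IsClosed K)
    (hKc : Convex ℝ K) (hLne : L.Nonempty) (hL : IsClosed L) (hLc : Convex ℝ L) (a b : 𝔼 n) :
    |‖proj K a - proj L a‖ - ‖proj K b - proj L b‖| ≤ 2 * ‖a - b‖ :=
  calc |‖proj K a - proj L a‖ - ‖proj K b - proj L b‖|
      ≤ ‖(proj K a - proj L a) - (proj K b - proj L b)‖ := abs_norm_sub_norm_le _ _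
    _ = ‖(proj K a - proj K b) - (proj L a - proj L b)‖ := by congr 1; abel
    _ ≤ ‖proj K a - proj K b‖ + ‖proj L a - proj L b‖ := norm_sub_le _ _
    _ ≤ 2 * ‖a - b‖ := by
      linarith [norm_proj_sub_proj_le hne hK hKc a b, norm_proj_sub_proj_le hLne hL hLc a b]

end Projection

section Cone

variable {K : Set (𝔼 n)} {S : Submodule ℝ (𝔼 n)}

lemma add_mem_of_convex_of_smul_mem (hKc : Convex ℝ K)
    (hcone : ∀ θ ∈ K, ∀ t : ℝ, 0 < t → t • θ ∈ K) {a b : 𝔼 n} (ha : a ∈ K) (hb : b ∈ K) :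
    a + b ∈ K := by
  have hhalf : (0 : ℝ) ≤ 1 / 2 := by norm_num
  have hmid := hcone _ (hKc ha hb hhalf hhalf (by norm_num)) 2 two_pos
  rwa [show (2 : ℝ) • ((1 / 2 : ℝ) • a + (1 / 2 : ℝ) • b) = a + b by module] at hmid

lemma norm_proj_sub_proj_cone_le (hK : IsClosed K) (hKc : Convex ℝ K)
    (hcone : ∀ θ ∈ K, ∀ t : ℝ, 0 < t → t • θ ∈ K) (hSK : (S : Set (𝔼 n)) ⊆ K) (y : 𝔼 n) :
    ‖proj (S : Set (𝔼 n)) y - proj K y‖ ≤ ‖y - proj (S : Set (𝔼 n)) y‖ := by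
  have hne : K.Nonempty := ⟨0, hSK S.zero_mem⟩
  have hp : proj (S : Set (𝔼 n)) y ∈ S :=
    proj_mem ⟨0, S.zero_mem⟩ S.closed_of_finiteDimensional S.convex y
  set p := proj (S : Set (𝔼 n)) y
  set q := proj K y
  have hq : q ∈ K := proj_mem hne hK hKc y
  have h2q : q + q ∈ K := two_smul ℝ q ▸ hcone q hq 2 two_pos
  have h0 : q - q ∈ K := (sub_self q).symm ▸ hSK S.zero_mem
  have hq_orth : ⟪y - q, q⟫ = 0 := inner_sub_proj_eq_zero hne hK hKc y h2q h0
  have hqp : q + p ∈ K := add_mem_of_convex_of_smul_mem hKc hcone hq (hSK hp)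
  have hqp' : q - p ∈ K := by
    simpa [sub_eq_add_neg] using add_mem_of_convex_of_smul_mem hKc hcone hq (hSK (S.neg_mem hp))
  have hp_orth : ⟪y - q, p⟫ = 0 := inner_sub_proj_eq_zero hne hK hKc y hqp hqp'
  have horth : ⟪y - q, q - p⟫ = 0 := by rw [inner_sub_right, hq_orth, hp_orth, sub_zero]
  have hpyth : ‖y - p‖ * ‖y - p‖ = ‖y - q‖ * ‖y - q‖ + ‖q - p‖ * ‖q - p‖ := by
    rw [← norm_add_sq_eq_norm_sq_add_norm_sq_real horth, sub_add_sub_cancel]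
  rw [norm_sub_rev p q]
  exact (mul_self_le_mul_self_iff (norm_nonneg _) (norm_nonneg _)).2
    (by linarith [mul_self_nonneg ‖y - q‖])

end Cone

section Statistic

variable {S I D : Set (𝔼 n)}

lemma Tstat_nonneg (y : 𝔼 n) : 0 ≤ Tstat S I D y := by
  unfold Tstat
  split_ifs <;> positivity

lemma Tstat_le_one {y : 𝔼 n} (hI : ‖proj S y - proj I y‖ ≤ ‖y - proj S y‖)
    (hD : ‖proj S y - proj D y‖ ≤ ‖y - proj S y‖) : Tstat S I D y ≤ 1 := by
  unfold Tstat
  split_ifs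
  · exact zero_le_one
  · exact div_le_one_of_le₀ (max_le (pow_le_pow_left₀ (norm_nonneg _) hI 2)
      (pow_le_pow_left₀ (norm_nonneg _) hD 2)) (sq_nonneg _)

lemma sqrt_max_sq {a b : ℝ} (ha : 0 ≤ a) (hb : 0 ≤ b) : √(max (a ^ 2) (b ^ 2)) = max a b := by
  rcases le_total a b with h | h
  · rw [max_eq_right h, max_eq_right (pow_le_pow_left₀ ha h 2), Real.sqrt_sq hb]
  · rw [max_eq_left h, max_eq_left (pow_le_pow_left₀ hb h 2), Real.sqrt_sq ha]

lemma sqrt_Tstat_of_not_mem {y : 𝔼 n} (hy : y ∉ S) :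
    √(Tstat S I D y) =
      max ‖proj S y - proj I y‖ ‖proj S y - proj D y‖ / ‖y - proj S y‖ := by
  rw [Tstat, if_neg hy, Real.sqrt_div' _ (sq_nonneg _),
    sqrt_max_sq (norm_nonneg _) (norm_nonneg _), Real.sqrt_sq (norm_nonneg _)]

end Statistic

end

theorem stmt4_general {n : ℕ} (I : Set (EuclideanSpace ℝ (Fin n)))
    (hclosed : IsClosed I) (hconv : Convex ℝ I)
    (hcone : ∀ θ ∈ I, ∀ t : ℝ, 0 < t → t • θ ∈ I)
    (S : Submodule ℝ (EuclideanSpace ℝ (Fin n)))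
    (hSI : (S : Set (EuclideanSpace ℝ (Fin n))) ⊆ I) :
    (∀ y : EuclideanSpace ℝ (Fin n), y ∉ S →
        0 ≤ Tstat (S : Set (EuclideanSpace ℝ (Fin n))) I (-I) y ∧
        Tstat (S : Set (EuclideanSpace ℝ (Fin n))) I (-I) y ≤ 1) ∧
    (∀ ε εhat : EuclideanSpace ℝ (Fin n), ε ∉ S → εhat ∉ S →
        |Real.sqrt (Tstat (S : Set (EuclideanSpace ℝ (Fin n))) I (-I) ε) -
            Real.sqrt (Tstat (S : Set (EuclideanSpace ℝ (Fin n))) I (-I) εhat)| ≤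
          4 * ‖ε - εhat‖ / ‖ε - proj (S : Set (EuclideanSpace ℝ (Fin n))) ε‖) := by
  have hne : I.Nonempty := ⟨0, hSI S.zero_mem⟩
  have hSne : (S : Set (𝔼 n)).Nonempty := ⟨0, S.zero_mem⟩
  have hScl : IsClosed (S : Set (𝔼 n)) := S.closed_of_finiteDimensional
  have hDcone : ∀ θ ∈ -I, ∀ t : ℝ, 0 < t → t • θ ∈ -I := fun θ hθ t ht => by
    simpa [Set.mem_neg, smul_neg] using hcone _ hθ t ht
  have hSD : (S : Set (𝔼 n)) ⊆ -I := fun s hs => hSI (S.neg_mem hs)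
  have hI y := norm_proj_sub_proj_cone_le hclosed hconv hcone hSI y
  have hD y := norm_proj_sub_proj_cone_le hclosed.neg hconv.neg hDcone hSD y
  refine ⟨fun y _ => ⟨Tstat_nonneg y, Tstat_le_one (hI y) (hD y)⟩, fun ε εhat hε hεhat => ?_⟩
  rw [sqrt_Tstat_of_not_mem hε, sqrt_Tstat_of_not_mem hεhat]
  have hF := (abs_max_sub_max_le_max _ _ _ _).trans <| max_le
    (abs_norm_proj_sub_proj_sub_le hSne hScl S.convex hne hclosed hconv ε εhat)
    (abs_norm_proj_sub_proj_sub_le hSne hScl S.convex hne.neg hclosed.neg hconv.neg ε εhat)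
  have hN := (abs_norm_sub_norm_le _ _).trans
    (norm_sub_proj_sub_sub_proj_le hSne hScl S.convex ε εhat)
  refine (abs_div_sub_div_le (norm_sub_proj_pos hSne hScl S.convex hε)
    (norm_sub_proj_pos hSne hScl S.convex hεhat) (le_max_of_le_left (norm_nonneg _))
    (max_le (hI εhat) (hD εhat)) hF hN).trans ?_
  gcongr
  norm_num

/-- for a nonempty closed convex cone `I`, a linear subspace `S ⊆ I`, and
`D = −I`, one has `0 ≤ T(y) ≤ 1` for every `y ∉ S`, and the Lipschitz-type bound
`|√T(ε) − √T(ε̂)| ≤ 4‖ε − ε̂‖ / ‖ε − Π(ε|S)‖` for all `ε, ε̂ ∉ S`. -/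
theorem stmt4 {n : ℕ} (I : Set (EuclideanSpace ℝ (Fin n)))
    (hne : I.Nonempty) (hclosed : IsClosed I) (hconv : Convex ℝ I)
    (hcone : ∀ θ ∈ I, ∀ t : ℝ, 0 < t → t • θ ∈ I)
    (S : Submodule ℝ (EuclideanSpace ℝ (Fin n)))
    (hSI : (S : Set (EuclideanSpace ℝ (Fin n))) ⊆ I) :
    (∀ y : EuclideanSpace ℝ (Fin n), y ∉ S →
        0 ≤ Tstat (S : Set (EuclideanSpace ℝ (Fin n))) I (-I) y ∧
        Tstat (S : Set (EuclideanSpace ℝ (Fin n))) I (-I) y ≤ 1) ∧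
    (∀ ε εhat : EuclideanSpace ℝ (Fin n), ε ∉ S → εhat ∉ S →
        |Real.sqrt (Tstat (S : Set (EuclideanSpace ℝ (Fin n))) I (-I) ε) -
            Real.sqrt (Tstat (S : Set (EuclideanSpace ℝ (Fin n))) I (-I) εhat)| ≤
          4 * ‖ε - εhat‖ / ‖ε - proj (S : Set (EuclideanSpace ℝ (Fin n))) ε‖) :=
  stmt4_general I hclosed hconv hcone S hSI
end

section
/- Let I ⊆ ℝ^n be a nonempty closed convex cone, S a linear subspace with S ⊆ I, D := −I, Ω_I := I ∩ S^⊥ and Ω_D := D ∩ S^⊥. Assume Ω_D ⊆ I°, where I° := {ρ ∈ ℝ^n : ⟨ρ, θ⟩ ≤ 0 for all θ ∈ I} is the polar cone of I. Then for every y ∈ ℝ^n and every θ ∈ Ω_I, ‖Π(y + θ|Ω_I)‖² ≥ ‖Π(y|Ω_I)‖². -/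
open scoped RealInnerProductSpace

lemma proj_spec {n : ℕ} (K : Set (EuclideanSpace ℝ (Fin n))) (hne : K.Nonempty)
    (hcl : IsClosed K) (hcv : Convex ℝ K) (y : EuclideanSpace ℝ (Fin n)) :
    proj K y ∈ K ∧ ∀ w ∈ K, ⟪y - proj K y, w - proj K y⟫ ≤ 0 := by
  haveI : Nonempty K := hne.to_subtype
  obtain ⟨v, hv, hmin⟩ := exists_norm_eq_iInf_of_complete_convex
    ⟨hne.choose, hne.choose_spec⟩ hcl.isComplete hcv y
  have h : ∃ p ∈ K, ∀ q ∈ K, ‖y - p‖ ≤ ‖y - q‖ := by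
    refine ⟨v, hv, fun q hq => ?_⟩
    rw [hmin]
    exact ciInf_le ⟨0, fun r ⟨w, hw⟩ => hw ▸ norm_nonneg _⟩ (⟨q, hq⟩ : K)
  have hproj : proj K y = h.choose := by
    unfold proj
    rw [dif_pos h]
  obtain ⟨hp, hple⟩ := h.choose_spec
  rw [hproj]
  refine ⟨hp, ?_⟩
  rw [← norm_eq_iInf_iff_real_inner_le_zero hcv hp]
  refine le_antisymm (le_ciInf fun w => hple w w.2) ?_
  exact ciInf_le ⟨0, fun r ⟨w, hw⟩ => hw ▸ norm_nonneg _⟩ (⟨_, hp⟩ : K)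

/-- let `I` be a nonempty closed convex cone, `S ⊆ I` a linear subspace,
`D := −I`, `Ω_I := I ∩ S^⊥`, `Ω_D := D ∩ S^⊥`, and assume `Ω_D ⊆ I°` (the polar cone of `I`).
Then for every `y` and every `θ ∈ Ω_I`, `‖Π(y + θ|Ω_I)‖² ≥ ‖Π(y|Ω_I)‖²`. -/
theorem stmt5 {n : ℕ} (I : Set (EuclideanSpace ℝ (Fin n)))
    (hne : I.Nonempty) (hclosed : IsClosed I) (hconv : Convex ℝ I)
    (hcone : ∀ θ ∈ I, ∀ t : ℝ, 0 < t → t • θ ∈ I)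
    (S : Submodule ℝ (EuclideanSpace ℝ (Fin n)))
    (hSI : (S : Set (EuclideanSpace ℝ (Fin n))) ⊆ I)
    (hA2 : (-I) ∩ (Sᗮ : Set (EuclideanSpace ℝ (Fin n))) ⊆
        {ρ : EuclideanSpace ℝ (Fin n) | ∀ θ ∈ I, ⟪ρ, θ⟫ ≤ 0}) :
    ∀ (y θ : EuclideanSpace ℝ (Fin n)), θ ∈ I ∩ (Sᗮ : Set (EuclideanSpace ℝ (Fin n))) →
      ‖proj (I ∩ (Sᗮ : Set (EuclideanSpace ℝ (Fin n)))) y‖ ^ 2 ≤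
        ‖proj (I ∩ (Sᗮ : Set (EuclideanSpace ℝ (Fin n)))) (y + θ)‖ ^ 2 := by
  intro y θ hθ
  set Ω : Set (EuclideanSpace ℝ (Fin n)) := I ∩ (Sᗮ : Set (EuclideanSpace ℝ (Fin n))) with hΩ
  have h0I : (0 : EuclideanSpace ℝ (Fin n)) ∈ I := hSI S.zero_mem
  have hΩne : Ω.Nonempty := ⟨0, h0I, Sᗮ.zero_mem⟩
  have hΩcl : IsClosed Ω := hclosed.inter (Submodule.isClosed_orthogonal S)
  have hΩcv : Convex ℝ Ω := hconv.inter (Sᗮ.convex)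
  -- Ω is closed under addition
  have hadd : ∀ a ∈ Ω, ∀ b ∈ Ω, a + b ∈ Ω := by
    intro a ha b hb
    have hmid : (1/2 : ℝ) • a + (1/2 : ℝ) • b ∈ I :=
      hconv ha.1 hb.1 (by norm_num) (by norm_num) (by norm_num)
    have h2 : (2 : ℝ) • ((1/2 : ℝ) • a + (1/2 : ℝ) • b) ∈ I :=
      hcone _ hmid 2 (by norm_num)
    have : (2 : ℝ) • ((1/2 : ℝ) • a + (1/2 : ℝ) • b) = a + b := by
      rw [smul_add, smul_smul, smul_smul]; norm_num
    exact ⟨this ▸ h2, Sᗮ.add_mem ha.2 hb.2⟩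
  obtain ⟨hpΩ, hpvar⟩ := proj_spec Ω hΩne hΩcl hΩcv y
  obtain ⟨hqΩ, hqvar⟩ := proj_spec Ω hΩne hΩcl hΩcv (y + θ)
  set p := proj Ω y
  set q := proj Ω (y + θ)
  -- ⟨θ, p⟩ ≥ 0 from hA2 applied to -p
  have hθp : (0 : ℝ) ≤ ⟪θ, p⟫ := by
    have hnegp : -p ∈ (-I) ∩ (Sᗮ : Set (EuclideanSpace ℝ (Fin n))) :=
      ⟨by simpa using hpΩ.1, Sᗮ.neg_mem hpΩ.2⟩
    have := hA2 hnegp θ hθ.1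
    rw [inner_neg_left] at this
    rw [real_inner_comm]
    linarith
  -- ⟨y - p, p⟩ ≥ 0 from variational inequality at w = 0
  have h1 : (0 : ℝ) ≤ ⟪y - p, p⟫ := by
    have := hpvar 0 ⟨h0I, Sᗮ.zero_mem⟩
    rw [zero_sub, inner_neg_right] at this
    linarith
  -- ⟨(y+θ) - q, p⟩ ≤ 0 from variational inequality at w = q + p
  have h2 : ⟪y + θ - q, p⟫ ≤ 0 := by
    have := hqvar (q + p) (hadd q hqΩ p hpΩ)
    simpa using this
  have key : ‖p‖ ^ 2 ≤ ⟪q, p⟫ := by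
    have hyp : ⟪y, p⟫ = ⟪y - p, p⟫ + ‖p‖ ^ 2 := by
      rw [inner_sub_left, real_inner_self_eq_norm_sq]; ring
    have h2' : ⟪y, p⟫ + ⟪θ, p⟫ - ⟪q, p⟫ ≤ 0 := by
      have := h2
      rw [inner_sub_left, inner_add_left] at this
      linarith
    linarith
  have hcs : ⟪q, p⟫ ≤ ‖q‖ * ‖p‖ := real_inner_le_norm q p
  rcases eq_or_lt_of_le (norm_nonneg p) with hp0 | hp0
  · rw [← hp0]; norm_num
  · have : ‖p‖ ≤ ‖q‖ := by
      have : ‖p‖ * ‖p‖ ≤ ‖q‖ * ‖p‖ := by nlinarith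
      exact le_of_mul_le_mul_right this hp0
    have := pow_le_pow_left₀ (norm_nonneg p) this 2
    exact this
end

section
/- Let μ be a Borel probability measure on [0,1]^d and H := L²(μ). Let K := {f ∈ H : f agrees μ-a.e. with a real-valued convex function on [0,1]^d}, so that −K is the corresponding set for concave functions, and let A := {f ∈ H : f agrees μ-a.e. with an affine function on [0,1]^d}. Assume K is closed in H (K is a convex cone containing A). Let φ₀ ∈ H, and let φ_I and φ_D be the metric projections of φ₀ onto K and onto −K, respectively. If φ_I ∈ A and φ_D ∈ A, then φ₀ ∈ A. Equivalently, if φ₀ is not μ-a.e. equal to an affine function, then at least one of the projections φ_I, φ_D is not μ-a.e. equal to an affine function. -/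
/-!
Write `u = φ₀ - φI` and `v = φ₀ - φD`. Adding an affine function preserves convexity and the
projections are affine, so the variational inequalities of the two projections give
`⟪u, f⟫ ≤ 0 ≤ ⟪v, f⟫` for every convex `f` and `u, v ⟂ A`. Since `u - v = φD - φI ∈ A`, this forces
`φD = φI`, hence `u = v ⟂ K`. The convex functions `x ↦ exp (ℓ x)`, `ℓ` linear, separate points
and are closed under products, so by Stone–Weierstrass on the cube (which carries `μ`) their classes
span a dense subspace of `L²(μ)`. Hence `u = 0` and `φ₀ = φI ∈ A`.
-/

open MeasureTheory Submodule
open scoped RealInnerProductSpace ENNReal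

section MetricProjection

variable {H : Type*} [NormedAddCommGroup H] [InnerProductSpace ℝ H]

def IsMetricProj (K : Set H) (x p : H) : Prop :=
  p ∈ K ∧ ∀ g ∈ K, ‖x - p‖ ≤ ‖x - g‖

theorem IsMetricProj.inner_sub_le_zero {K : Set H} (hK : Convex ℝ K) {x p : H}
    (hp : IsMetricProj K x p) : ∀ g ∈ K, ⟪x - p, g - p⟫ ≤ 0 := by
  have : Nonempty K := ⟨⟨p, hp.1⟩⟩
  refine (norm_eq_iInf_iff_real_inner_le_zero hK hp.1).1 (le_antisymm ?_ ?_)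
  · exact le_ciInf fun g => hp.2 g g.2
  · exact ciInf_le ⟨0, Set.forall_mem_range.2 fun _ => norm_nonneg _⟩ (⟨p, hp.1⟩ : K)

variable {K : Set H} {A : AddSubgroup H} {x p : H}

theorem IsMetricProj.inner_le_zero_of_mem (hK : Convex ℝ K) (hKA : ∀ g ∈ K, ∀ a ∈ A, g + a ∈ K)
    (hp : IsMetricProj K x p) (hpA : p ∈ A) : ∀ g ∈ K, ⟪x - p, g⟫ ≤ 0 := fun g hg => by
  simpa using hp.inner_sub_le_zero hK (g + p) (hKA g hg p hpA)

theorem IsMetricProj.inner_eq_zero_of_mem (hK : Convex ℝ K) (hKA : ∀ g ∈ K, ∀ a ∈ A, g + a ∈ K)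
    (hp : IsMetricProj K x p) : ∀ a ∈ A, ⟪x - p, a⟫ = 0 := fun a ha => by
  have h₁ := hp.inner_sub_le_zero hK (p + a) (hKA p hp.1 a ha)
  have h₂ := hp.inner_sub_le_zero hK (p + -a) (hKA p hp.1 (-a) (A.neg_mem ha))
  simp only [add_sub_cancel_left, inner_neg_right] at h₁ h₂
  linarith

theorem eq_of_isMetricProj_of_isMetricProj_neg (hK : Convex ℝ K)
    (hKA : ∀ g ∈ K, ∀ a ∈ A, g + a ∈ K) (hKd : Dense (span ℝ K : Set H)) {pI pD : H}
    (hI : IsMetricProj K x pI) (hD : IsMetricProj (-K) x pD) (hIA : pI ∈ A) (hDA : pD ∈ A) :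
    x = pI := by
  have hnegKA : ∀ g ∈ -K, ∀ a ∈ A, g + a ∈ -K := fun g hg a ha => by
    rw [Set.mem_neg, neg_add]
    exact hKA (-g) hg (-a) (A.neg_mem ha)
  have huK := hI.inner_le_zero_of_mem hK hKA hIA
  have huA := hI.inner_eq_zero_of_mem hK hKA
  have hvK := hD.inner_le_zero_of_mem hK.neg hnegKA hDA
  have hvA := hD.inner_eq_zero_of_mem hK.neg hnegKA
  have hDI : pD = pI := by
    have hsub : pD - pI ∈ A := A.sub_mem hDA hIA
    have : ⟪(x - pI) - (x - pD), pD - pI⟫ = 0 := by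
      rw [inner_sub_left, huA _ hsub, hvA _ hsub, sub_zero]
    rw [sub_sub_sub_cancel_left] at this
    exact sub_eq_zero.1 (inner_self_eq_zero.1 this)
  subst hDI
  have horth : ∀ g ∈ K, ⟪x - pD, g⟫ = 0 := fun g hg => by
    have := hvK (-g) (by simpa using hg)
    rw [inner_neg_right] at this
    exact le_antisymm (huK g hg) (by linarith)
  refine sub_eq_zero.1 (hKd.eq_zero_of_inner_left ℝ fun v hv => ?_)
  induction hv using Submodule.span_induction with
  | mem g hg => exact horth g hg
  | zero => exact inner_zero_right _
  | add v w _ _ hv hw => rw [inner_add_right, hv, hw, add_zero]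
  | smul r v _ hv => rw [inner_smul_right, hv, mul_zero]

end MetricProjection

theorem Submonoid.dense_span_of_separatesPoints {X : Type*} [TopologicalSpace X] [CompactSpace X]
    (M : Submonoid C(X, ℝ)) (hM : ((⇑) '' (M : Set C(X, ℝ))).SeparatesPoints) :
    Dense (span ℝ (M : Set C(X, ℝ)) : Set C(X, ℝ)) := by
  have hSW := ContinuousMap.subalgebra_topologicalClosure_eq_top_of_separatesPoints
    (Algebra.adjoin ℝ (M : Set C(X, ℝ))) fun x y hxy => by
      obtain ⟨f, hf, hne⟩ := hM hxy
      exact ⟨f, Set.image_mono Algebra.subset_adjoin hf, hne⟩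
  have hspan : (span ℝ (M : Set C(X, ℝ)) : Set C(X, ℝ)) = Algebra.adjoin ℝ (M : Set C(X, ℝ)) := by
    rw [← Subalgebra.coe_toSubmodule, Algebra.adjoin_eq_span, Submonoid.closure_eq]
  rw [hspan, dense_iff_closure_eq, ← Subalgebra.topologicalClosure_coe, hSW, Algebra.coe_top]

namespace ContinuousMap

variable {E : Type*} [TopologicalSpace E] [MeasurableSpace E] {μ : Measure E} {p : ℝ≥0∞}
  {X : Set E} [CompactSpace X] (hμX : μ Xᶜ = 0)

include hμX in
theorem ae_norm_le_norm_restrict (f : C(E, ℝ)) : ∀ᵐ x ∂μ, ‖f x‖ ≤ ‖f.restrict X‖ := by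
  filter_upwards [mem_ae_iff.2 hμX] with x hx
  exact (f.restrict X).norm_coe_le_norm ⟨x, hx⟩

variable [BorelSpace E] [IsFiniteMeasure μ]

include hμX in
theorem memLp_of_measure_compl_eq_zero (f : C(E, ℝ)) : MemLp f p μ :=
  .of_bound f.continuous.aestronglyMeasurable _ (ae_norm_le_norm_restrict hμX f)

variable (p) in
noncomputable def toLpOn : C(E, ℝ) →ₗ[ℝ] Lp ℝ p μ where
  toFun f := (memLp_of_measure_compl_eq_zero hμX f).toLp f
  map_add' _ _ := MemLp.toLp_add _ _
  map_smul' r _ := MemLp.toLp_const_smul r _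

theorem coeFn_toLpOn (f : C(E, ℝ)) : toLpOn p hμX f =ᵐ[μ] f :=
  MemLp.coeFn_toLp (memLp_of_measure_compl_eq_zero hμX f)

theorem norm_toLpOn_le (f : C(E, ℝ)) :
    ‖toLpOn p hμX f‖ ≤ measureUnivNNReal μ ^ p.toReal⁻¹ * ‖f.restrict X‖ := by
  refine Lp.norm_le_of_ae_bound (f := toLpOn p hμX f) (norm_nonneg _) ?_
  filter_upwards [coeFn_toLpOn hμX f, ae_norm_le_norm_restrict hμX f] with x hx hle
  rwa [hx]

theorem denseRange_toLpOn [Fact (1 ≤ p)] [NormalSpace E] [μ.WeaklyRegular] (hp : p ≠ ∞) :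
    DenseRange (toLpOn p hμX) := by
  refine (Lp.boundedContinuousFunction_dense (p := p) ℝ μ hp).mono ?_
  rintro f hf
  obtain ⟨g, hg⟩ := Lp.mem_boundedContinuousFunction_iff.1 hf
  refine ⟨g.toContinuousMap, Lp.ext ?_⟩
  filter_upwards [coeFn_toLpOn hμX g.toContinuousMap, g.toContinuousMap.coeFn_toAEEqFun μ]
    with x h₁ h₂
  rw [h₁, ← h₂, hg]

theorem dense_span_toLpOn_image [Fact (1 ≤ p)] [NormalSpace E] [μ.WeaklyRegular] (hp : p ≠ ∞)
    (M : Submonoid C(E, ℝ)) (hM : ((⇑) '' (M : Set C(E, ℝ))).SeparatesPoints) :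
    Dense (span ℝ (toLpOn p hμX '' M) : Set (Lp ℝ p μ)) := by
  let R : C(E, ℝ) →ₐ[ℝ] C(X, ℝ) := compRightAlgHom ℝ ℝ (restrict X (.id E))
  have hSW : Dense (span ℝ (M.map R : Set C(X, ℝ)) : Set C(X, ℝ)) := by
    refine Submonoid.dense_span_of_separatesPoints _ fun x y hxy => ?_
    obtain ⟨_, ⟨f, hf, rfl⟩, hne⟩ := hM (Subtype.val_injective.ne hxy)
    exact ⟨R f, ⟨R f, ⟨f, hf, rfl⟩, rfl⟩, hne⟩
  refine Dense.of_closure ((denseRange_toLpOn hμX hp).mono ?_)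
  rintro _ ⟨f, rfl⟩
  set C : ℝ := measureUnivNNReal μ ^ p.toReal⁻¹
  refine Metric.mem_closure_iff.2 fun ε hε => ?_
  obtain ⟨q, hq, hfq⟩ := Metric.mem_closure_iff.1 (hSW (R f)) (ε / (C + 1)) (by positivity)
  rw [Submonoid.coe_map, ← AlgHom.coe_toLinearMap, span_image] at hq
  obtain ⟨g, hg, rfl⟩ := mem_map.1 hq
  refine ⟨toLpOn p hμX g, span_image (toLpOn p hμX) ▸ mem_map_of_mem hg, ?_⟩
  calc dist (toLpOn p hμX f) (toLpOn p hμX g) = ‖toLpOn p hμX (f - g)‖ := by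
        rw [dist_eq_norm, map_sub]
    _ ≤ C * dist (R f) (R g) := by
        rw [dist_eq_norm, ← map_sub]
        exact norm_toLpOn_le hμX (f - g)
    _ ≤ C * (ε / (C + 1)) := by gcongr; exact hfq.le
    _ < ε := by
        rw [mul_div_assoc', div_lt_iff₀ (by positivity)]
        nlinarith

end ContinuousMap

namespace MeasureTheory.Lp

section ConvexOnClasses

variable {E : Type*} [AddCommGroup E] [Module ℝ E] [MeasurableSpace E]

variable (p : ℝ≥0∞) (μ : Measure E) in
def convexOnClasses (s : Set E) : Set (Lp ℝ p μ) :=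
  {f | ∃ g : E → ℝ, ConvexOn ℝ s g ∧ ∀ᵐ x ∂μ, f x = g x}

variable {p : ℝ≥0∞} {μ : Measure E}

theorem convex_convexOnClasses (s : Set E) : Convex ℝ (convexOnClasses p μ s) := by
  rintro f ⟨g, hg, hfg⟩ f' ⟨g', hg', hfg'⟩ a b ha hb -
  refine ⟨a • g + b • g', (hg.smul ha).add (hg'.smul hb), ?_⟩
  filter_upwards [hfg, hfg', Lp.coeFn_add (a • f) (b • f'), Lp.coeFn_smul a f,
    Lp.coeFn_smul b f'] with x h₁ h₂ h₃ h₄ h₅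
  simp only [h₃, Pi.add_apply, h₄, h₅, Pi.smul_apply, h₁, h₂]

end ConvexOnClasses

section Affine

variable {d : ℕ} {p : ℝ≥0∞} {μ : Measure (Fin d → ℝ)}

variable (p μ) in
def affineClasses : AddSubgroup (Lp ℝ p μ) where
  carrier := {f | ∃ (a : ℝ) (b : Fin d → ℝ), ∀ᵐ x ∂μ, f x = a + ∑ i, b i * x i}
  zero_mem' := ⟨0, 0, by filter_upwards [Lp.coeFn_zero ℝ p μ] with x hx; simpa using hx⟩
  add_mem' := by
    rintro f f' ⟨a, b, hf⟩ ⟨a', b', hf'⟩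
    refine ⟨a + a', b + b', ?_⟩
    filter_upwards [hf, hf', Lp.coeFn_add f f'] with x h₁ h₂ h₃
    simp only [h₃, Pi.add_apply, h₁, h₂, add_mul, Finset.sum_add_distrib]
    ring
  neg_mem' := by
    rintro f ⟨a, b, hf⟩
    refine ⟨-a, -b, ?_⟩
    filter_upwards [hf, Lp.coeFn_neg f] with x h₁ h₂
    refine h₂.trans ?_
    rw [Pi.neg_apply, h₁, neg_add]
    simp only [Pi.neg_apply, neg_mul, Finset.sum_neg_distrib]

theorem add_mem_convexOnClasses {s : Set (Fin d → ℝ)} (hs : Convex ℝ s) {f e : Lp ℝ p μ}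
    (hf : f ∈ convexOnClasses p μ s) (he : e ∈ affineClasses p μ) :
    f + e ∈ convexOnClasses p μ s := by
  obtain ⟨g, hg, hfg⟩ := hf
  obtain ⟨a, b, he⟩ := he
  have haff : ConvexOn ℝ s fun x : Fin d → ℝ => a + ∑ i, b i * x i :=
    (convexOn_const a hs).add ((dotProductBilin ℝ ℝ b).convexOn hs)
  refine ⟨g + fun x => a + ∑ i, b i * x i, hg.add haff, ?_⟩
  filter_upwards [hfg, he, Lp.coeFn_add f e] with x h₁ h₂ h₃
  rw [h₃, Pi.add_apply, h₁, h₂, Pi.add_apply]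

end Affine

section Density

variable {E : Type*} [NormedAddCommGroup E] [NormedSpace ℝ E]

variable (E) in
def expDualSubmonoid : Submonoid C(E, ℝ) where
  carrier := Set.range fun ℓ : StrongDual ℝ E => (⟨fun x => Real.exp (ℓ x), by fun_prop⟩ : C(E, ℝ))
  one_mem' := ⟨0, by ext; simp⟩
  mul_mem' := by
    rintro _ _ ⟨ℓ, rfl⟩ ⟨ℓ', rfl⟩
    exact ⟨ℓ + ℓ', by ext; simp [Real.exp_add]⟩

theorem separatesPoints_expDualSubmonoid :
    ((⇑) '' (expDualSubmonoid E : Set C(E, ℝ))).SeparatesPoints := fun x y hxy => by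
  obtain ⟨ℓ, hℓ⟩ := SeparatingDual.exists_separating_of_ne (R := ℝ) hxy
  exact ⟨_, ⟨_, ⟨ℓ, rfl⟩, rfl⟩, fun h => hℓ (Real.exp_injective h)⟩

theorem convexOn_of_mem_expDualSubmonoid {s : Set E} (hs : Convex ℝ s) {f : C(E, ℝ)}
    (hf : f ∈ expDualSubmonoid E) : ConvexOn ℝ s f := by
  obtain ⟨ℓ, rfl⟩ := hf
  exact (convexOn_exp.comp_linearMap (ℓ : E →ₗ[ℝ] ℝ)).subset (Set.subset_univ s) hs

variable [MeasurableSpace E] [BorelSpace E] {μ : Measure E} [IsFiniteMeasure μ] {p : ℝ≥0∞}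

theorem dense_span_convexOnClasses [Fact (1 ≤ p)] (hp : p ≠ ∞) {s : Set E} (hs : Convex ℝ s)
    (hsc : IsCompact s) (hμs : μ sᶜ = 0) :
    Dense (span ℝ (convexOnClasses p μ s) : Set (Lp ℝ p μ)) := by
  have := isCompact_iff_compactSpace.1 hsc
  refine (ContinuousMap.dense_span_toLpOn_image hμs hp _ separatesPoints_expDualSubmonoid).mono
    (span_mono ?_)
  rintro _ ⟨f, hf, rfl⟩
  exact ⟨f, convexOn_of_mem_expDualSubmonoid hs hf, ContinuousMap.coeFn_toLpOn hμs f⟩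

end Density

end MeasureTheory.Lp

theorem stmt9_general {d : ℕ}
    (μ : Measure (Fin d → ℝ)) [IsProbabilityMeasure μ]
    (hsupp : μ (Set.Icc (0 : Fin d → ℝ) 1)ᶜ = 0)
    (K A : Set (Lp ℝ 2 μ))
    (hK : K = {f : Lp ℝ 2 μ | ∃ g : (Fin d → ℝ) → ℝ,
      ConvexOn ℝ (Set.Icc (0 : Fin d → ℝ) 1) g ∧ ∀ᵐ x ∂μ, f x = g x})
    (hA : A = {f : Lp ℝ 2 μ | ∃ (a : ℝ) (b : Fin d → ℝ),
      ∀ᵐ x ∂μ, f x = a + ∑ i, b i * x i})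
    (φ₀ φI φD : Lp ℝ 2 μ)
    (hφI : φI ∈ K ∧ ∀ g ∈ K, ‖φ₀ - φI‖ ≤ ‖φ₀ - g‖)
    (hφD : φD ∈ -K ∧ ∀ g ∈ -K, ‖φ₀ - φD‖ ≤ ‖φ₀ - g‖)
    (hIA : φI ∈ A) (hDA : φD ∈ A) :
    φ₀ ∈ A := by
  subst hK hA
  have hcube : Convex ℝ (Set.Icc (0 : Fin d → ℝ) 1) := convex_Icc 0 1
  have hφ₀ : φ₀ = φI := eq_of_isMetricProj_of_isMetricProj_neg (A := Lp.affineClasses 2 μ)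
    (Lp.convex_convexOnClasses _) (fun _ hg _ he => Lp.add_mem_convexOnClasses hcube hg he)
    (Lp.dense_span_convexOnClasses ENNReal.ofNat_ne_top hcube isCompact_Icc hsupp)
    hφI hφD hIA hDA
  rwa [hφ₀]

/-- let `μ` be a Borel probability measure on `[0,1]^d` and `H = L²(μ)`.
Let `K ⊆ H` be the set of functions agreeing `μ`-a.e. with a convex function on `[0,1]^d`
(so `−K` is the corresponding concave set), and `A ⊆ H` the set of functions agreeing
`μ`-a.e. with an affine function.  Assume `K` is closed.  If the metric projections `φI` of
`φ₀` onto `K` and `φD` of `φ₀` onto `−K` both lie in `A`, then `φ₀ ∈ A`. -/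
theorem stmt9 {d : ℕ}
    (μ : Measure (Fin d → ℝ)) [IsProbabilityMeasure μ]
    (hsupp : μ (Set.Icc (0 : Fin d → ℝ) 1)ᶜ = 0)
    (K A : Set (Lp ℝ 2 μ))
    (hK : K = {f : Lp ℝ 2 μ | ∃ g : (Fin d → ℝ) → ℝ,
      ConvexOn ℝ (Set.Icc (0 : Fin d → ℝ) 1) g ∧ ∀ᵐ x ∂μ, f x = g x})
    (hA : A = {f : Lp ℝ 2 μ | ∃ (a : ℝ) (b : Fin d → ℝ),
      ∀ᵐ x ∂μ, f x = a + ∑ i, b i * x i})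
    (hKclosed : IsClosed K)
    (φ₀ φI φD : Lp ℝ 2 μ)
    (hφI : φI ∈ K ∧ ∀ g ∈ K, ‖φ₀ - φI‖ ≤ ‖φ₀ - g‖)
    (hφD : φD ∈ -K ∧ ∀ g ∈ -K, ‖φ₀ - φD‖ ≤ ‖φ₀ - g‖)
    (hIA : φI ∈ A) (hDA : φD ∈ A) :
    φ₀ ∈ A :=
  stmt9_general μ hsupp K A hK hA φ₀ φI φD hφI hφD hIA hDA
end
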